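/- arXiv:2302.02059 — 2 statements merged into one kernel-verified Lean document; each statement's English description precedes it below -/
import Mathlib

section
/- Suppose 0 < β < 1/(N+1). If t = (t_0, t_1, …, t_m) ∈ ℝ^{m+1} with 0 = t_0 < t_1 < … < t_m is an admissible translation vector, then Γ_t = ⋃_{j=0}^m (Γ + t_j) is a self-similar set. -/
noncomputable section

namespace HSCantor

/-- A `D`-coding of `x`: a digit sequence `c` with digits in `D ⊆ ℤ` such that
`x = (1-β)/N · Σ_{k=1}^∞ c_k β^{k-1}` (here indexed from `k = 0`). -/
def IsCoding (N : ℕ) (β : ℝ) (D : Set ℤ) (x : ℝ) (c : ℕ → ℤ) : Prop :=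
  (∀ k, c k ∈ D) ∧ x = (1 - β) / N * ∑' k : ℕ, (c k : ℝ) * β ^ k

/-- The set `Γ_{β,D}` for a digit set `D ⊆ ℤ`. -/
def cantorD (N : ℕ) (β : ℝ) (D : Set ℤ) : Set ℝ := { x | ∃ c, IsCoding N β D x c }

/-- The homogeneous symmetric Cantor set `Γ = Γ_{β,{0,1,…,N}}`. -/
def Gamma (N : ℕ) (β : ℝ) : Set ℝ := cantorD N β (Set.Icc 0 (N : ℤ))

/-- `E ⊆ ℝ` is a self-similar set: it is nonempty, compact, and is the union of its
images under finitely many contracting similitudes `x ↦ r x + b`, `0 < |r| < 1`. -/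
def IsSelfSimilar (E : Set ℝ) : Prop :=
  E.Nonempty ∧ IsCompact E ∧ ∃ F : Finset (ℝ × ℝ),
    (∀ p ∈ F, 0 < |p.1| ∧ |p.1| < 1) ∧
    E = ⋃ p ∈ F, (fun x => p.1 * x + p.2) '' E

/-- `Γ_t = ⋃_{j=0}^m (Γ + t_j)`. -/
def GammaT (N : ℕ) (β : ℝ) {m : ℕ} (t : Fin (m + 1) → ℝ) : Set ℝ :=
  ⋃ j, (fun x => x + t j) '' Gamma N β

/-- The set `T = ⋃_{n≥1} { (1-β)/N · Σ_{k=1}^n j_k β^{-k} : j_k ∈ {0,…,N} }`. -/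
def Tset (N : ℕ) (β : ℝ) : Set ℝ :=
  { x | ∃ n : ℕ, 1 ≤ n ∧ ∃ c : ℕ → ℕ, (∀ k, c k ≤ N) ∧
      x = (1 - β) / N * ∑ k ∈ Finset.Icc 1 n, (c k : ℝ) * β ^ (-(k : ℤ)) }

/-- `d` is a digit representation of the translation vector `t` with `τ` digits:
`t_j = (1-β)/N · Σ_{k=1}^τ d_{j,k} β^{-k}` with all digits in `{0,…,N}`. -/
def IsDigitRep (N : ℕ) (β : ℝ) {m : ℕ} (t : Fin (m + 1) → ℝ) (τ : ℕ)
    (d : Fin (m + 1) → ℕ → ℕ) : Prop :=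
  (∀ j k, d j k ≤ N) ∧
    ∀ j, t j = (1 - β) / N * ∑ k ∈ Finset.Icc 1 τ, (d j k : ℝ) * β ^ (-(k : ℤ))

/-- `d` is a digit representation of `t` with `τ = τ_t` digits, `τ_t` minimal. -/
def IsMinimalRep (N : ℕ) (β : ℝ) {m : ℕ} (t : Fin (m + 1) → ℝ) (τ : ℕ)
    (d : Fin (m + 1) → ℕ → ℕ) : Prop :=
  IsDigitRep N β t τ d ∧ ∀ τ' < τ, ∀ d', ¬ IsDigitRep N β t τ' d'

/-- `s_k = max_{0 ≤ j ≤ m} t_{j,k}`. -/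
def digitSup {m : ℕ} (d : Fin (m + 1) → ℕ → ℕ) (k : ℕ) : ℕ :=
  Finset.univ.sup fun j => d j k

/-- Words of length `n` over the alphabet `{0,1,…,N}`, as lists of naturals. -/
def Words (N n : ℕ) : Set (List ℕ) := { w | w.length = n ∧ ∀ x ∈ w, x ≤ N }

/-- `Ω_t^n`: words `i_1 … i_n ∈ {0,…,N}^n` with `i_{n+1-k} ≤ N - s_k` for `1 ≤ k ≤ τ`.
(A list `w = [i_1, …, i_n]` satisfies `i_{n+1-k} = w.getD (n-k) 0`.) -/
def Omega (N τ : ℕ) (s : ℕ → ℕ) (n : ℕ) : Set (List ℕ) :=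
  { w | w ∈ Words N n ∧ ∀ k, 1 ≤ k → k ≤ τ → w.getD (n - k) 0 + s k ≤ N }

/-- `Ω̂_t^n`: words `i_1 … i_n ∈ {0,…,N}^n` with `i_{n+1-k} ≥ s_k` for `1 ≤ k ≤ τ`. -/
def OmegaHat (N τ : ℕ) (s : ℕ → ℕ) (n : ℕ) : Set (List ℕ) :=
  { w | w ∈ Words N n ∧ ∀ k, 1 ≤ k → k ≤ τ → s k ≤ w.getD (n - k) 0 }

/-- `W_t^τ = A_t^τ ∪ Â_t^τ`: words obtained from a word in `Ω_t^τ` (resp. `Ω̂_t^τ`)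
by adding (resp. subtracting) the digits of some `t_j` to the last `τ` positions. -/
def Wset (N : ℕ) {m : ℕ} (τ : ℕ) (d : Fin (m + 1) → ℕ → ℕ) : Set (List ℕ) :=
  { v | ∃ w ∈ Omega N τ (digitSup d) τ, ∃ j : Fin (m + 1),
      v = List.ofFn fun idx : Fin τ => w.getD idx 0 + d j (τ - (idx : ℕ)) } ∪
  { v | ∃ w ∈ OmegaHat N τ (digitSup d) τ, ∃ j : Fin (m + 1),
      v = List.ofFn fun idx : Fin τ => w.getD idx 0 - d j (τ - (idx : ℕ)) }

/-- The symbolic admissibility condition: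
`⋃_{n=τ}^ℓ {0,…,N}^{n-τ} × W_t^τ × {0,…,N}^{ℓ-n} = {0,…,N}^ℓ` for some `ℓ ≥ τ`. -/
def AdmissibleWith (N : ℕ) {m : ℕ} (τ : ℕ) (d : Fin (m + 1) → ℕ → ℕ) : Prop :=
  ∃ ℓ, τ ≤ ℓ ∧
    (⋃ n ∈ Finset.Icc τ ℓ,
      { z : List ℕ | ∃ u ∈ Words N (n - τ), ∃ w ∈ Wset N τ d, ∃ v ∈ Words N (ℓ - n),
          z = u ++ w ++ v }) = Words N ℓ

/-- `t` is an admissible translation vector. -/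
def IsAdmissible (N : ℕ) (β : ℝ) {m : ℕ} (t : Fin (m + 1) → ℝ) : Prop :=
  (∀ j, t j ∈ Tset N β) ∧
    ∃ τ d, IsMinimalRep N β t τ d ∧ AdmissibleWith N τ d

/-- The vertex set `V_t = {0,…,N}^τ \ W_t^τ` of the directed graph `G_t`. -/
def Vset (N : ℕ) {m : ℕ} (τ : ℕ) (d : Fin (m + 1) → ℕ → ℕ) : Set (List ℕ) :=
  Words N τ \ Wset N τ d

/-- The graph on `V` with an edge `i → j` iff `i_2 … i_τ = j_1 … j_{τ-1}` has a cycle: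
a directed path of positive length starting and ending at the same vertex. -/
def HasCycle (V : Set (List ℕ)) : Prop :=
  ∃ (L : ℕ) (p : ℕ → List ℕ), 0 < L ∧ (∀ i ≤ L, p i ∈ V) ∧
    (∀ i < L, (p i).drop 1 = (p (i + 1)).dropLast) ∧ p 0 = p L

open Classical in
/-- The adjacency matrix of the directed graph `G_t`, indexed by all words of length `τ`
over `{0,…,N}`; its `(i,j)` entry is `1` exactly when `i, j ∈ V_t` and there is a
directed edge `i → j`, and the rows and columns outside `V_t` are zero. -/
def adjMat (N τ : ℕ) (V : Set (List ℕ)) :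
    Matrix (Fin τ → Fin (N + 1)) (Fin τ → Fin (N + 1)) ℕ :=
  fun i j =>
    if (List.ofFn fun k => (i k : ℕ)) ∈ V ∧ (List.ofFn fun k => (j k : ℕ)) ∈ V ∧
        (List.ofFn fun k => (i k : ℕ)).drop 1 = (List.ofFn fun k => (j k : ℕ)).dropLast
    then 1 else 0

/-- `φ_i(x) = βx + i(1-β)/N`. -/
def phi (N : ℕ) (β : ℝ) (i : ℕ) (x : ℝ) : ℝ := β * x + i * (1 - β) / N

/-- `φ_{i_1 … i_n} = φ_{i_1} ∘ ⋯ ∘ φ_{i_n}`. -/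
def phiWord (N : ℕ) (β : ℝ) (w : List ℕ) (x : ℝ) : ℝ := w.foldr (phi N β) x

/-- The conjugate translation vector `t̂_j = t_m - t_{m-j}`. -/
def conj {m : ℕ} (t : Fin (m + 1) → ℝ) : Fin (m + 1) → ℝ :=
  fun j => t (Fin.last m) - t ⟨m - (j : ℕ), Nat.lt_succ_of_le (Nat.sub_le m j)⟩

section Aux

variable (N : ℕ) (β : ℝ)

lemma summable_digit (hβ0 : 0 ≤ β) (hβ1 : β < 1) (c : ℕ → ℕ) (hc : ∀ k, c k ≤ N) :
    Summable fun k => (c k : ℝ) * β ^ k := by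
  refine Summable.of_nonneg_of_le (fun k => by positivity) (fun k => ?_)
    ((summable_geometric_of_lt_one hβ0 hβ1).mul_left (N : ℝ))
  have hk : ((c k : ℕ) : ℝ) ≤ (N : ℝ) := by exact_mod_cast hc k
  exact mul_le_mul_of_nonneg_right hk (by positivity)

lemma mem_Gamma_iff {x : ℝ} :
    x ∈ Gamma N β ↔ ∃ c : ℕ → ℕ, (∀ k, c k ≤ N) ∧
      x = (1 - β) / N * ∑' k, (c k : ℝ) * β ^ k := by
  constructor
  · rintro ⟨c, hc, rfl⟩
    refine ⟨fun k => (c k).toNat, fun k => ?_, ?_⟩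
    · have := hc k; simp only [Set.mem_Icc] at this
      show (c k).toNat ≤ N; omega
    · congr 1
      apply tsum_congr; intro k
      have := hc k; simp only [Set.mem_Icc] at this
      show ((c k : ℤ) : ℝ) * β ^ k = (((c k).toNat : ℕ) : ℝ) * β ^ k
      congr 1
      exact_mod_cast (congrArg (Int.cast : ℤ → ℝ) (Int.toNat_of_nonneg this.1)).symm
  · rintro ⟨c, hc, rfl⟩
    refine ⟨fun k => (c k : ℤ), fun k => ⟨Int.ofNat_nonneg _, by show ((c k : ℕ) : ℤ) ≤ (N : ℤ); exact_mod_cast hc k⟩, ?_⟩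
    push_cast; rfl

lemma zero_mem_Gamma : (0 : ℝ) ∈ Gamma N β := by
  rw [mem_Gamma_iff]
  exact ⟨fun _ => 0, fun _ => Nat.zero_le _, by simp⟩

lemma isCompact_Gamma (hβ0 : 0 ≤ β) (hβ1 : β < 1) : IsCompact (Gamma N β) := by
  have hrange : Gamma N β = Set.range
      (fun c : ℕ → Fin (N + 1) => (1 - β) / N * ∑' k, ((c k : ℕ) : ℝ) * β ^ k) := by
    ext x
    rw [mem_Gamma_iff]
    constructor
    · rintro ⟨c, hc, rfl⟩
      exact ⟨fun k => ⟨c k, Nat.lt_succ_of_le (hc k)⟩, rfl⟩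
    · rintro ⟨c, rfl⟩
      exact ⟨fun k => (c k : ℕ), fun k => Nat.lt_succ_iff.mp (c k).isLt, rfl⟩
  rw [hrange]
  apply isCompact_range
  apply Continuous.mul continuous_const
  apply continuous_tsum (u := fun k => (N : ℝ) * β ^ k)
  · intro k
    exact Continuous.mul (by continuity) continuous_const
  · exact (summable_geometric_of_lt_one hβ0 hβ1).mul_left _
  · intro k c
    rw [Real.norm_eq_abs, abs_mul, abs_pow, abs_of_nonneg (by positivity : (0:ℝ) ≤ ((c k:ℕ):ℝ)),
      abs_of_nonneg hβ0]
    apply mul_le_mul_of_nonneg_right _ (by positivity)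
    exact_mod_cast Nat.lt_succ_iff.mp (c k).isLt

end Aux
section Aux2

variable (N : ℕ) (β : ℝ)

lemma tsum_shift (hβ0 : 0 ≤ β) (hβ1 : β < 1) (c : ℕ → ℕ) (hc : ∀ k, c k ≤ N) :
    ∑' k, (c k : ℝ) * β ^ k = (c 0 : ℝ) + β * ∑' k, (c (k + 1) : ℝ) * β ^ k := by
  rw [Summable.tsum_eq_zero_add (summable_digit N β hβ0 hβ1 c hc)]
  congr 1
  · simp
  · rw [← tsum_mul_left]
    apply tsum_congr; intro k
    rw [pow_succ]; ring

lemma phi_mem (hβ0 : 0 ≤ β) (hβ1 : β < 1) {i : ℕ} (hi : i ≤ N) {x : ℝ}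
    (hx : x ∈ Gamma N β) : phi N β i x ∈ Gamma N β := by
  rw [mem_Gamma_iff] at hx ⊢
  obtain ⟨c, hc, rfl⟩ := hx
  set c' : ℕ → ℕ := fun k => if k = 0 then i else c (k - 1) with hc'
  have hc'b : ∀ k, c' k ≤ N := by
    intro k; rw [hc']; dsimp only; split <;> [exact hi; exact hc _]
  refine ⟨c', hc'b, ?_⟩
  rw [tsum_shift N β hβ0 hβ1 c' hc'b]
  have h0 : c' 0 = i := rfl
  have hs : ∀ k, c' (k + 1) = c k := fun k => by simp [hc']
  simp only [h0, hs]
  rw [phi]; ring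

lemma Gamma_step (hβ0 : 0 ≤ β) (hβ1 : β < 1) {x : ℝ} (hx : x ∈ Gamma N β) :
    ∃ i ≤ N, ∃ y ∈ Gamma N β, x = phi N β i y := by
  rw [mem_Gamma_iff] at hx
  obtain ⟨c, hc, rfl⟩ := hx
  refine ⟨c 0, hc 0, (1 - β) / N * ∑' k, (c (k + 1) : ℝ) * β ^ k, ?_, ?_⟩
  · rw [mem_Gamma_iff]; exact ⟨fun k => c (k + 1), fun k => hc _, rfl⟩
  · rw [tsum_shift N β hβ0 hβ1 c hc, phi]; ring

lemma one_sub_mem (hN : 0 < N) (hβ0 : 0 ≤ β) (hβ1 : β < 1) {x : ℝ}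
    (hx : x ∈ Gamma N β) : 1 - x ∈ Gamma N β := by
  rw [mem_Gamma_iff] at hx ⊢
  obtain ⟨c, hc, rfl⟩ := hx
  refine ⟨fun k => N - c k, fun k => Nat.sub_le _ _, ?_⟩
  have h1 : ∀ k : ℕ, ((N - c k : ℕ) : ℝ) * β ^ k = (N : ℝ) * β ^ k - (c k : ℝ) * β ^ k := by
    intro k; rw [Nat.cast_sub (hc k)]; ring
  rw [tsum_congr h1, Summable.tsum_sub ((summable_geometric_of_lt_one hβ0 hβ1).mul_left _)
    (summable_digit N β hβ0 hβ1 c hc), tsum_mul_left, tsum_geometric_of_lt_one hβ0 hβ1]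
  have hNne : (N : ℝ) ≠ 0 := Nat.cast_ne_zero.mpr hN.ne'
  have hbne : (1 : ℝ) - β ≠ 0 := ne_of_gt (by linarith)
  field_simp

lemma phiWord_nil (x : ℝ) : phiWord N β [] x = x := rfl

lemma phiWord_cons (a : ℕ) (w : List ℕ) (x : ℝ) :
    phiWord N β (a :: w) x = phi N β a (phiWord N β w x) := rfl

lemma phiWord_append (u v : List ℕ) (x : ℝ) :
    phiWord N β (u ++ v) x = phiWord N β u (phiWord N β v x) := by
  simp [phiWord, List.foldr_append]

lemma phiWord_eq (w : List ℕ) (x : ℝ) :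
    phiWord N β w x = β ^ w.length * x +
      (1 - β) / N * ∑ p ∈ Finset.range w.length, (w.getD p 0 : ℝ) * β ^ p := by
  induction w with
  | nil => simp [phiWord]
  | cons a w ih =>
    rw [phiWord_cons, ih, phi, List.length_cons, Finset.sum_range_succ']
    simp only [List.getD_cons_succ, List.getD_cons_zero, pow_zero, mul_one, pow_succ,
      ← mul_assoc, ← Finset.sum_mul]
    ring

lemma phiWord_affine (w : List ℕ) (x y : ℝ) :
    phiWord N β w (x + y) = phiWord N β w x + β ^ w.length * y := by
  rw [phiWord_eq, phiWord_eq]; ring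

lemma phiWord_mem (hβ0 : 0 ≤ β) (hβ1 : β < 1) {w : List ℕ} (hw : ∀ a ∈ w, a ≤ N) {x : ℝ}
    (hx : x ∈ Gamma N β) : phiWord N β w x ∈ Gamma N β := by
  induction w with
  | nil => exact hx
  | cons a w ih =>
    rw [phiWord_cons]
    exact phi_mem N β hβ0 hβ1 (hw a List.mem_cons_self)
      (ih fun b hb => hw b (List.mem_cons_of_mem a hb))

lemma Gamma_words (hβ0 : 0 ≤ β) (hβ1 : β < 1) (l : ℕ) {x : ℝ} (hx : x ∈ Gamma N β) :
    ∃ z ∈ Words N l, ∃ y ∈ Gamma N β, x = phiWord N β z y := by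
  induction l generalizing x with
  | zero => exact ⟨[], ⟨rfl, by simp⟩, x, hx, rfl⟩
  | succ l ih =>
    obtain ⟨i, hi, y, hy, rfl⟩ := Gamma_step N β hβ0 hβ1 hx
    obtain ⟨z, hz, y', hy', rfl⟩ := ih hy
    refine ⟨i :: z, ⟨by simp [hz.1], ?_⟩, y', hy', rfl⟩
    · intro a ha
      rcases List.mem_cons.mp ha with h | h
      · exact h ▸ hi
      · exact hz.2 a h

lemma getD_le {w : List ℕ} {n : ℕ} (hw : w ∈ Words N n) (p : ℕ) : w.getD p 0 ≤ N := by
  by_cases hp : p < w.length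
  · rw [List.getD_eq_getElem w 0 hp]
    exact hw.2 _ (List.getElem_mem hp)
  · rw [List.getD_eq_default w 0 (Nat.le_of_not_lt hp)]
    exact Nat.zero_le _

lemma getD_ofFn {n : ℕ} (f : Fin n → ℕ) {p : ℕ} (hp : p < n) :
    (List.ofFn f).getD p 0 = f ⟨p, hp⟩ := by
  rw [List.getD_eq_getElem _ 0 (by simpa using hp)]
  simp

lemma mem_words_append {u v : List ℕ} {nu nv : ℕ} (hu : u ∈ Words N nu) (hv : v ∈ Words N nv) :
    u ++ v ∈ Words N (nu + nv) := by
  refine ⟨by simp [hu.1, hv.1], fun a ha => ?_⟩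
  rcases List.mem_append.mp ha with h | h
  · exact hu.2 a h
  · exact hv.2 a h

lemma words_finite (n : ℕ) : (Words N n).Finite := by
  apply Set.Finite.subset
    (Set.finite_range fun f : Fin n → Fin (N + 1) => List.ofFn fun i => ((f i : ℕ)))
  intro w hw
  refine ⟨fun i => ⟨w.getD i 0, Nat.lt_succ_of_le (getD_le N hw i)⟩, ?_⟩
  apply List.ext_getElem (by simp [hw.1])
  intro i h1 h2
  simp only [List.getElem_ofFn]
  rw [← List.getD_eq_getElem w 0 h2]

end Aux2
section Aux3

variable (N : ℕ) (β : ℝ) {m : ℕ} (t : Fin (m + 1) → ℝ) (τ : ℕ) (d : Fin (m + 1) → ℕ → ℕ)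

lemma beta_pow_t (hβ0 : 0 < β)
    (hdrep : ∀ j, t j = (1 - β) / N * ∑ k ∈ Finset.Icc 1 τ, (d j k : ℝ) * β ^ (-(k : ℤ)))
    (j : Fin (m + 1)) :
    β ^ τ * t j = (1 - β) / N * ∑ p ∈ Finset.range τ, (d j (τ - p) : ℝ) * β ^ p := by
  rw [hdrep j, mul_left_comm]
  congr 1
  rw [Finset.mul_sum]
  apply Finset.sum_nbij' (fun k => τ - k) (fun p => τ - p)
  · intro a ha; simp only [Finset.mem_Icc] at ha; simp only [Finset.mem_range]; omega
  · intro a ha; simp only [Finset.mem_range] at ha; simp only [Finset.mem_Icc]; omega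
  · intro a ha; simp only [Finset.mem_Icc] at ha; omega
  · intro a ha; simp only [Finset.mem_range] at ha; omega
  · intro k hk
    simp only [Finset.mem_Icc] at hk
    have h1 : β ^ τ * β ^ (-(k : ℤ)) = β ^ (τ - k) := by
      rw [zpow_neg, zpow_natCast, ← pow_sub₀ β (ne_of_gt hβ0) hk.2]
    have h2 : τ - (τ - k) = k := by omega
    rw [h2, mul_left_comm, h1, mul_comm]

lemma A_entries {ω : List ℕ} (hω : ω ∈ Omega N τ (digitSup d) τ) (j : Fin (m + 1)) :
    ∀ x ∈ (List.ofFn fun idx : Fin τ => ω.getD ↑idx 0 + d j (τ - (idx : ℕ))), x ≤ N := by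
  intro x hx
  rw [List.mem_ofFn] at hx
  obtain ⟨idx, rfl⟩ := hx
  show ω.getD ↑idx 0 + d j (τ - (idx : ℕ)) ≤ N
  have hidx : (idx : ℕ) < τ := idx.isLt
  have h := hω.2 (τ - (idx : ℕ)) (by omega) (by omega)
  have he : τ - (τ - (idx : ℕ)) = (idx : ℕ) := by omega
  rw [he] at h
  have hd : d j (τ - (idx : ℕ)) ≤ digitSup d (τ - (idx : ℕ)) :=
    Finset.le_sup (f := fun j' => d j' (τ - (idx : ℕ))) (Finset.mem_univ j)
  omega

lemma A_map (hβ0 : 0 < β)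
    (hdrep : ∀ j, t j = (1 - β) / N * ∑ k ∈ Finset.Icc 1 τ, (d j k : ℝ) * β ^ (-(k : ℤ)))
    {ω : List ℕ} (hω : ω ∈ Omega N τ (digitSup d) τ) (j : Fin (m + 1)) (x : ℝ) :
    phiWord N β (List.ofFn fun idx : Fin τ => ω.getD ↑idx 0 + d j (τ - (idx : ℕ))) x
      = phiWord N β ω (x + t j) := by
  have hlen : ω.length = τ := hω.1.1
  rw [phiWord_eq, phiWord_eq, List.length_ofFn, hlen]
  have hsum : ∑ p ∈ Finset.range τ,
        (((List.ofFn fun idx : Fin τ => ω.getD ↑idx 0 + d j (τ - (idx : ℕ))).getD p 0 : ℕ) : ℝ)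
          * β ^ p
      = ∑ p ∈ Finset.range τ, ((ω.getD p 0 : ℝ) * β ^ p + (d j (τ - p) : ℝ) * β ^ p) := by
    apply Finset.sum_congr rfl
    intro p hp
    rw [getD_ofFn _ (Finset.mem_range.mp hp)]
    push_cast
    ring
  rw [hsum, Finset.sum_add_distrib, mul_add ((1 - β) / ↑N)]
  rw [← beta_pow_t N β t τ d hβ0 hdrep j]
  ring

lemma Ahat_digit_le {ω : List ℕ} (hω : ω ∈ OmegaHat N τ (digitSup d) τ) (j : Fin (m + 1))
    (idx : Fin τ) : d j (τ - (idx : ℕ)) ≤ ω.getD ↑idx 0 := by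
  have hidx : (idx : ℕ) < τ := idx.isLt
  have h := hω.2 (τ - (idx : ℕ)) (by omega) (by omega)
  have he : τ - (τ - (idx : ℕ)) = (idx : ℕ) := by omega
  rw [he] at h
  exact le_trans (Finset.le_sup (f := fun j' => d j' (τ - (idx : ℕ))) (Finset.mem_univ j)) h

lemma Ahat_entries {ω : List ℕ} (hω : ω ∈ OmegaHat N τ (digitSup d) τ) (j : Fin (m + 1)) :
    ∀ x ∈ (List.ofFn fun idx : Fin τ => ω.getD ↑idx 0 - d j (τ - (idx : ℕ))), x ≤ N := by
  intro x hx
  rw [List.mem_ofFn] at hx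
  obtain ⟨idx, rfl⟩ := hx
  exact le_trans (Nat.sub_le _ _) (getD_le N hω.1 _)

lemma Ahat_map (hβ0 : 0 < β)
    (hdrep : ∀ j, t j = (1 - β) / N * ∑ k ∈ Finset.Icc 1 τ, (d j k : ℝ) * β ^ (-(k : ℤ)))
    {ω : List ℕ} (hω : ω ∈ OmegaHat N τ (digitSup d) τ) (j : Fin (m + 1)) (x : ℝ) :
    phiWord N β (List.ofFn fun idx : Fin τ => ω.getD ↑idx 0 - d j (τ - (idx : ℕ))) x
      = phiWord N β ω x - β ^ τ * t j := by
  have hlen : ω.length = τ := hω.1.1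
  rw [phiWord_eq, phiWord_eq, List.length_ofFn, hlen]
  have hsum : ∑ p ∈ Finset.range τ,
        (((List.ofFn fun idx : Fin τ => ω.getD ↑idx 0 - d j (τ - (idx : ℕ))).getD p 0 : ℕ) : ℝ)
          * β ^ p
      = ∑ p ∈ Finset.range τ, ((ω.getD p 0 : ℝ) * β ^ p - (d j (τ - p) : ℝ) * β ^ p) := by
    apply Finset.sum_congr rfl
    intro p hp
    have hp' := Finset.mem_range.mp hp
    rw [getD_ofFn _ hp']
    rw [Nat.cast_sub (Ahat_digit_le N τ d hω j ⟨p, hp'⟩)]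
    ring
  rw [hsum, Finset.sum_sub_distrib, mul_sub ((1 - β) / ↑N)]
  rw [← beta_pow_t N β t τ d hβ0 hdrep j]
  ring

end Aux3
/-- Parameter set for the core decomposition. -/
def D0 (N τ l : ℕ) {m : ℕ} (d : Fin (m + 1) → ℕ → ℕ) : Set (List ℕ × Bool) :=
  {q | ∃ n ∈ Finset.Icc τ l, ∃ u ∈ Words N (n - τ), ∃ ω : List ℕ,
    q.1 = u ++ ω ∧ ((q.2 = false ∧ ω ∈ Omega N τ (digitSup d) τ) ∨
      (q.2 = true ∧ ω ∈ OmegaHat N τ (digitSup d) τ))}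

/-- The similitude associated with a parameter. -/
def mapOf (N : ℕ) (β : ℝ) (q : List ℕ × Bool) (x : ℝ) : ℝ :=
  phiWord N β q.1 (if q.2 then 1 - x else x)

section Core

variable {N : ℕ} {β : ℝ} {m : ℕ} {t : Fin (m + 1) → ℝ} {τ l : ℕ} {d : Fin (m + 1) → ℕ → ℕ}

lemma coreFwd (hN : 0 < N) (hβ0 : 0 < β) (hβ1 : β < 1)
    (hdrep : ∀ j, t j = (1 - β) / N * ∑ k ∈ Finset.Icc 1 τ, (d j k : ℝ) * β ^ (-(k : ℤ)))
    (hadmEq : (⋃ n ∈ Finset.Icc τ l,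
      { z : List ℕ | ∃ u ∈ Words N (n - τ), ∃ w ∈ Wset N τ d, ∃ v ∈ Words N (l - n),
          z = u ++ w ++ v }) = Words N l)
    {x : ℝ} (hx : x ∈ Gamma N β) :
    ∃ q ∈ D0 N τ l d, ∃ z ∈ GammaT N β t, x = mapOf N β q z := by
  obtain ⟨z, hz, y, hy, rfl⟩ := Gamma_words N β hβ0.le hβ1 l hx
  rw [← hadmEq] at hz
  simp only [Set.mem_iUnion, Set.mem_setOf_eq] at hz
  obtain ⟨n, hn, u, hu, w, hw, v, hv, rfl⟩ := hz
  rw [phiWord_append, phiWord_append]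
  set y' := phiWord N β v y with hy'def
  have hy' : y' ∈ Gamma N β := phiWord_mem N β hβ0.le hβ1 hv.2 hy
  rcases hw with hw | hw
  · obtain ⟨ω, hω, j, rfl⟩ := hw
    refine ⟨(u ++ ω, false), ⟨n, hn, u, hu, ω, rfl, Or.inl ⟨rfl, hω⟩⟩,
      y' + t j, ?_, ?_⟩
    · exact Set.mem_iUnion.mpr ⟨j, ⟨y', hy', rfl⟩⟩
    · have hmap : mapOf N β (u ++ ω, false) (y' + t j)
          = phiWord N β (u ++ ω) (y' + t j) := rfl
      rw [hmap, phiWord_append, A_map N β t τ d hβ0 hdrep hω j]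
  · obtain ⟨ω, hω, j, rfl⟩ := hw
    have h1y' : (1 : ℝ) - y' ∈ Gamma N β := one_sub_mem N β hN hβ0.le hβ1 hy'
    refine ⟨(u ++ ω, true), ⟨n, hn, u, hu, ω, rfl, Or.inr ⟨rfl, hω⟩⟩,
      (1 - y') + t j, ?_, ?_⟩
    · exact Set.mem_iUnion.mpr ⟨j, ⟨1 - y', h1y', rfl⟩⟩
    · have hmap : mapOf N β (u ++ ω, true) ((1 - y') + t j)
          = phiWord N β (u ++ ω) (1 - ((1 - y') + t j)) := rfl
      rw [hmap, phiWord_append, Ahat_map N β t τ d hβ0 hdrep hω j]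
      have h2 : (1 : ℝ) - (1 - y' + t j) = y' + -(t j) := by ring
      rw [h2, phiWord_affine]
      congr 1
      rw [hω.1.1]
      ring

lemma coreBwd (hN : 0 < N) (hβ0 : 0 < β) (hβ1 : β < 1)
    (hdrep : ∀ j, t j = (1 - β) / N * ∑ k ∈ Finset.Icc 1 τ, (d j k : ℝ) * β ^ (-(k : ℤ)))
    {q : List ℕ × Bool} (hq : q ∈ D0 N τ l d) {z : ℝ} (hz : z ∈ GammaT N β t) :
    mapOf N β q z ∈ Gamma N β := by
  obtain ⟨wq, σ⟩ := q
  obtain ⟨n, hn, u, hu, ω, hq1, hcase⟩ := hq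
  simp only at hq1
  subst hq1
  obtain ⟨j, hj⟩ := Set.mem_iUnion.mp hz
  obtain ⟨y, hy, rfl⟩ := hj
  rcases hcase with ⟨hq2, hω⟩ | ⟨hq2, hω⟩ <;> simp only at hq2 <;> subst hq2
  · have hmap : mapOf N β (u ++ ω, false) (y + t j)
        = phiWord N β (u ++ ω) (y + t j) := rfl
    rw [hmap]
    show phiWord N β (u ++ ω) (y + t j) ∈ Gamma N β
    rw [phiWord_append, ← A_map N β t τ d hβ0 hdrep hω j, ← phiWord_append]
    apply phiWord_mem N β hβ0.le hβ1 _ hy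
    intro a ha
    rcases List.mem_append.mp ha with h | h
    · exact hu.2 a h
    · exact A_entries N τ d hω j a h
  · have hmap : mapOf N β (u ++ ω, true) (y + t j)
        = phiWord N β (u ++ ω) (1 - (y + t j)) := rfl
    rw [hmap]
    have h1y : (1 : ℝ) - y ∈ Gamma N β := one_sub_mem N β hN hβ0.le hβ1 hy
    have heq : (1 : ℝ) - (y + t j) = (1 - y) + -(t j) := by ring
    rw [phiWord_append, heq, phiWord_affine, hω.1.1]
    have : phiWord N β ω (1 - y) + β ^ τ * -(t j)
        = phiWord N β (List.ofFn fun idx : Fin τ =>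
            ω.getD ↑idx 0 - d j (τ - (idx : ℕ))) (1 - y) := by
      rw [Ahat_map N β t τ d hβ0 hdrep hω j]
      ring
    rw [this, ← phiWord_append]
    apply phiWord_mem N β hβ0.le hβ1 _ h1y
    intro a ha
    rcases List.mem_append.mp ha with h | h
    · exact hu.2 a h
    · exact Ahat_entries N τ d hω j a h

lemma D0_finite : (D0 N τ l d).Finite := by
  have hsub : D0 N τ l d ⊆ (⋃ n ∈ Finset.Iic l, Words N n) ×ˢ (Set.univ : Set Bool) := by
    rintro ⟨w, σ⟩ ⟨n, hn, u, hu, ω, hq1, hcase⟩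
    simp only [Finset.mem_Icc] at hn
    have hω : ω ∈ Words N τ := by
      rcases hcase with ⟨_, hω⟩ | ⟨_, hω⟩
      · exact hω.1
      · exact hω.1
    simp only at hq1
    subst hq1
    have : u ++ ω ∈ Words N ((n - τ) + τ) := mem_words_append N hu hω
    constructor
    · exact Set.mem_iUnion₂.mpr ⟨(n - τ) + τ, by simp only [Finset.mem_Iic]; omega, this⟩
    · trivial
  exact Set.Finite.subset (Set.Finite.prod
    (Set.Finite.biUnion (Finset.finite_toSet _) fun n _ => words_finite N n) (Set.finite_univ))
    hsub

end Core
/-- Suppose `0 < β < 1/(N+1)`. If `t = (t_0,…,t_m)` with `0 = t_0 < ⋯ < t_m` is an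
admissible translation vector, then `Γ_t = ⋃_{j=0}^m (Γ + t_j)` is a self-similar set. -/
theorem stmt16 (N : ℕ) (hN : 0 < N) (β : ℝ) (hβ0 : 0 < β) (hβ1 : β < 1 / (N + 1))
    (m : ℕ) (t : Fin (m + 1) → ℝ) (ht0 : t 0 = 0) (hmono : StrictMono t)
    (hadm : IsAdmissible N β t) :
    IsSelfSimilar (GammaT N β t) := by
  classical
  obtain ⟨-, τ, d, ⟨⟨hdle, hdrep⟩, -⟩, l, hτl, hadmEq⟩ := hadm
  have hβ1' : β < 1 := by
    have h1 : (0 : ℝ) < N + 1 := by positivity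
    have h2 : (1 : ℝ) / (N + 1) ≤ 1 := by
      rw [div_le_one h1]
      have : (0 : ℝ) ≤ N := Nat.cast_nonneg N
      linarith
    linarith
  -- the parameter set and the map to (slope, intercept) pairs
  set P : Set (ℕ × Fin (m + 1) × (List ℕ × Bool)) :=
    (Set.Iic N) ×ˢ (Set.univ : Set (Fin (m + 1))) ×ˢ (D0 N τ l d) with hPdef
  have hPfin : P.Finite :=
    (Set.finite_Iic N).prod (Set.finite_univ.prod D0_finite)
  set Φ : ℕ × Fin (m + 1) × (List ℕ × Bool) → ℝ × ℝ := fun p =>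
    ((if p.2.2.2 then (-1 : ℝ) else 1) * β ^ (p.2.2.1.length + 1),
      phi N β p.1 (phiWord N β p.2.2.1 (if p.2.2.2 then (1 : ℝ) else 0)) + t p.2.1) with hΦdef
  have hSfin : (Φ '' P).Finite := hPfin.image Φ
  -- the pointwise form of each similitude
  have hptw : ∀ (i : ℕ) (j : Fin (m + 1)) (q : List ℕ × Bool) (z : ℝ),
      (Φ (i, j, q)).1 * z + (Φ (i, j, q)).2 = phi N β i (mapOf N β q z) + t j := by
    rintro i j ⟨w, σ⟩ z
    cases σ
    · show (1 : ℝ) * β ^ (w.length + 1) * z + (phi N β i (phiWord N β w (0 : ℝ)) + t j)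
        = phi N β i (phiWord N β w z) + t j
      simp only [phi, phiWord_eq]
      ring
    · show (-1 : ℝ) * β ^ (w.length + 1) * z + (phi N β i (phiWord N β w (1 : ℝ)) + t j)
        = phi N β i (phiWord N β w (1 - z)) + t j
      simp only [phi, phiWord_eq]
      ring
  refine ⟨⟨t 0, Set.mem_iUnion.mpr ⟨0, ⟨0, zero_mem_Gamma N β, by simp⟩⟩⟩, ?_,
    hSfin.toFinset, ?_, ?_⟩
  · -- compactness
    apply isCompact_iUnion
    intro j
    exact (isCompact_Gamma N β hβ0.le hβ1').image (by continuity)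
  · -- contraction ratios
    intro p hp
    rw [Set.Finite.mem_toFinset] at hp
    obtain ⟨⟨i, j, w, σ⟩, hmem, rfl⟩ := hp
    have h1 : (0 : ℝ) < β ^ (w.length + 1) := pow_pos hβ0 _
    have h2 : β ^ (w.length + 1) < 1 := pow_lt_one₀ hβ0.le hβ1' (Nat.succ_ne_zero _)
    cases σ
    · show 0 < |(1 : ℝ) * β ^ (w.length + 1)| ∧ |(1 : ℝ) * β ^ (w.length + 1)| < 1
      rw [one_mul, abs_of_pos h1]
      exact ⟨h1, h2⟩
    · show 0 < |(-1 : ℝ) * β ^ (w.length + 1)| ∧ |(-1 : ℝ) * β ^ (w.length + 1)| < 1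
      rw [neg_one_mul, abs_neg, abs_of_pos h1]
      exact ⟨h1, h2⟩
  · -- the self-similarity identity
    ext x
    simp only [Set.mem_iUnion, Set.Finite.mem_toFinset, exists_prop]
    constructor
    · intro hx
      obtain ⟨j, hj⟩ := Set.mem_iUnion.mp hx
      obtain ⟨g, hg, rfl⟩ := hj
      obtain ⟨i, hi, g', hg', rfl⟩ := Gamma_step N β hβ0.le hβ1' hg
      obtain ⟨q, hq, z, hz, rfl⟩ := coreFwd hN hβ0 hβ1' hdrep hadmEq hg'
      refine ⟨Φ (i, j, q), ⟨(i, j, q), ⟨hi, trivial, hq⟩, rfl⟩, z, hz, ?_⟩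
      show (Φ (i, j, q)).1 * z + (Φ (i, j, q)).2 = phi N β i (mapOf N β q z) + t j
      exact hptw i j q z
    · rintro ⟨p, ⟨⟨i, j, q⟩, hmem, rfl⟩, z, hz, rfl⟩
      obtain ⟨hi, -, hq⟩ := hmem
      have hz' : mapOf N β q z ∈ Gamma N β := coreBwd hN hβ0 hβ1' hdrep hq hz
      have hmem2 : phi N β i (mapOf N β q z) + t j ∈ GammaT N β t :=
        Set.mem_iUnion.mpr ⟨j, ⟨phi N β i (mapOf N β q z),
          phi_mem N β hβ0.le hβ1' hi hz', rfl⟩⟩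
      show (Φ (i, j, q)).1 * z + (Φ (i, j, q)).2 ∈ GammaT N β t
      rw [hptw i j q z]
      exact hmem2

end HSCantor
end
end

section
/- Suppose 0 < β < 1/(N+1), and let t = (t_0, t_1, …, t_m) ∈ T^{m+1} with 0 = t_0 < t_1 < … < t_m. If β^q · t ∈ T^{m+1} for some q ∈ ℤ_+ (where β^q · t = (β^q t_0, …, β^q t_m)), then t is an admissible translation vector if and only if β^q · t is an admissible translation vector. -/
noncomputable section

namespace HSCantor

section Aux
open Finset

variable {N : ℕ} {β : ℝ}

lemma geomS (hβ0 : 0 < β) (hβ1 : β < 1) (n : ℕ) :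
    ∑ j ∈ range n, β ^ j ≤ 1 / (1 - β) := by
  rw [le_div_iff₀ (by linarith)]
  have := geom_sum_mul β n
  have hb : (∑ i ∈ range n, β ^ i) * (β - 1) = β ^ n - 1 := this
  nlinarith [pow_nonneg hβ0.le n, pow_le_one₀ hβ0.le hβ1.le (n := n)]

lemma digit_sum_bound (hβ0 : 0 < β) (hβ1 : β < 1) (n : ℕ) (c : ℕ → ℕ)
    (hc : ∀ k, c k ≤ N) :
    ∑ j ∈ range n, (c j : ℝ) * β ^ j ≤ N * (1 / (1 - β)) := by
  calc ∑ j ∈ range n, (c j : ℝ) * β ^ j ≤ ∑ j ∈ range n, (N : ℝ) * β ^ j := by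
        apply Finset.sum_le_sum
        intro i _
        have : (c i : ℝ) ≤ N := by exact_mod_cast hc i
        nlinarith [pow_nonneg hβ0.le i]
    _ = N * ∑ j ∈ range n, β ^ j := by rw [Finset.mul_sum]
    _ ≤ N * (1 / (1 - β)) := by
        apply mul_le_mul_of_nonneg_left (geomS hβ0 hβ1 n) (by positivity)

lemma unique_pos (hβ0 : 0 < β) (hNβ : (N : ℝ) * β < 1 - β) :
    ∀ (n : ℕ) (a b : ℕ → ℕ), (∀ k, a k ≤ N) → (∀ k, b k ≤ N) →
      (∑ j ∈ range n, (a j : ℝ) * β ^ j = ∑ j ∈ range n, (b j : ℝ) * β ^ j) →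
      ∀ j < n, a j = b j := by
  intro n
  induction n with
  | zero => intro a b _ _ _ j hj; omega
  | succ n ih =>
    intro a b ha hb hsum j hj
    have hβ1 : β < 1 := by
      have : (0:ℝ) ≤ (N:ℝ) * β := by positivity
      linarith
    have hrw : ∀ c : ℕ → ℕ, ∑ j ∈ range (n+1), (c j : ℝ) * β ^ j
        = β * (∑ j ∈ range n, (c (j+1) : ℝ) * β ^ j) + c 0 := by
      intro c
      rw [Finset.sum_range_succ' (fun j => (c j : ℝ) * β ^ j) n]
      rw [Finset.mul_sum]
      congr 1
      · apply Finset.sum_congr rfl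
        intro i _
        ring
      · simp
    rw [hrw a, hrw b] at hsum
    -- first digit equal
    set Sa := ∑ j ∈ range n, ((a (j+1) : ℝ)) * β ^ j with hSa
    set Sb := ∑ j ∈ range n, ((b (j+1) : ℝ)) * β ^ j with hSb
    have hSa0 : 0 ≤ Sa := Finset.sum_nonneg (fun i _ => by positivity)
    have hSb0 : 0 ≤ Sb := Finset.sum_nonneg (fun i _ => by positivity)
    have hSaN : Sa ≤ N * (1 / (1 - β)) := digit_sum_bound hβ0 hβ1 n _ (fun k => ha _)
    have hSbN : Sb ≤ N * (1 / (1 - β)) := digit_sum_bound hβ0 hβ1 n _ (fun k => hb _)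
    have h1β : (0:ℝ) < 1 - β := by linarith
    have habs : |(a 0 : ℝ) - (b 0 : ℝ)| < 1 := by
      have h2 : (a 0 : ℝ) - b 0 = β * (Sb - Sa) := by linarith
      rw [h2, abs_mul, abs_of_pos hβ0]
      have : |Sb - Sa| ≤ N * (1 / (1 - β)) := by
        rw [abs_sub_le_iff]; constructor <;> linarith
      calc β * |Sb - Sa| ≤ β * (N * (1 / (1 - β))) :=
            mul_le_mul_of_nonneg_left this hβ0.le
        _ < 1 := by
            rw [show β * ((N:ℝ) * (1 / (1 - β))) = ((N:ℝ) * β) / (1 - β) by ring,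
              div_lt_one h1β]
            linarith
    have h0 : a 0 = b 0 := by
      have hz : ((|(a 0 : ℤ) - (b 0 : ℤ)| : ℤ) : ℝ) < 1 := by push_cast; exact habs
      have hz' : |(a 0 : ℤ) - (b 0 : ℤ)| < 1 := by exact_mod_cast hz
      have := abs_lt.1 hz'
      omega
    rcases Nat.eq_zero_or_pos j with rfl | hj0
    · exact h0
    · have hSeq : Sa = Sb := by
        have : β * Sa = β * Sb := by
          have : (a 0 : ℝ) = b 0 := by exact_mod_cast h0
          linarith
        exact mul_left_cancel₀ hβ0.ne' this
      have := ih (fun k => a (k+1)) (fun k => b (k+1)) (fun k => ha _) (fun k => hb _)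
        hSeq (j - 1) (by omega)
      simpa [Nat.sub_add_cancel hj0] using this

lemma icc_to_range (hβ0 : 0 < β) (n : ℕ) (c : ℕ → ℕ) :
    ∑ k ∈ Icc 1 n, (c k : ℝ) * β ^ (-(k:ℤ))
      = β ^ (-(n:ℤ)) * ∑ j ∈ range n, (c (n - j) : ℝ) * β ^ j := by
  rw [Finset.mul_sum]
  apply Finset.sum_nbij' (i := fun k => n - k) (j := fun j => n - j)
  · intro a ha; rw [Finset.mem_Icc] at ha; rw [Finset.mem_range]; omega
  · intro a ha; rw [Finset.mem_range] at ha; rw [Finset.mem_Icc]; omega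
  · intro a ha; rw [Finset.mem_Icc] at ha; omega
  · intro a ha; rw [Finset.mem_range] at ha; omega
  · intro a ha
    rw [Finset.mem_Icc] at ha
    rw [show n - (n - a) = a by omega]
    rw [mul_comm (β ^ (-(n:ℤ))), mul_assoc]
    congr 1
    rw [← zpow_natCast β (n - a), ← zpow_add₀ hβ0.ne']
    congr 1
    omega

lemma pad_sum (n₁ n : ℕ) (h : n₁ ≤ n) (c : ℕ → ℕ) :
    ∑ k ∈ Icc 1 n₁, (c k : ℝ) * β ^ (-(k:ℤ))
      = ∑ k ∈ Icc 1 n, ((if k ≤ n₁ then c k else 0 : ℕ) : ℝ) * β ^ (-(k:ℤ)) := by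
  calc ∑ k ∈ Icc 1 n₁, (c k : ℝ) * β ^ (-(k:ℤ))
      = ∑ k ∈ Icc 1 n₁, ((if k ≤ n₁ then c k else 0 : ℕ) : ℝ) * β ^ (-(k:ℤ)) := by
        apply Finset.sum_congr rfl
        intro k hk
        rw [Finset.mem_Icc] at hk
        rw [if_pos hk.2]
    _ = ∑ k ∈ Icc 1 n, ((if k ≤ n₁ then c k else 0 : ℕ) : ℝ) * β ^ (-(k:ℤ)) := by
        apply Finset.sum_subset (Finset.Icc_subset_Icc_right h)
        intro k hk hk'
        rw [Finset.mem_Icc] at hk hk'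
        rw [if_neg (by omega)]
        simp

lemma rep_unique (hβ0 : 0 < β) (hNβ : (N : ℝ) * β < 1 - β)
    (n₁ n₂ : ℕ) (a b : ℕ → ℕ) (ha : ∀ k, a k ≤ N) (hb : ∀ k, b k ≤ N)
    (h : ∑ k ∈ Icc 1 n₁, (a k : ℝ) * β ^ (-(k:ℤ))
        = ∑ k ∈ Icc 1 n₂, (b k : ℝ) * β ^ (-(k:ℤ))) :
    ∀ k, 1 ≤ k → (if k ≤ n₁ then a k else 0) = (if k ≤ n₂ then b k else 0) := by
  set n := max n₁ n₂ with hn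
  set a' : ℕ → ℕ := fun k => if k ≤ n₁ then a k else 0 with ha'
  set b' : ℕ → ℕ := fun k => if k ≤ n₂ then b k else 0 with hb'
  have ha'N : ∀ k, a' k ≤ N := fun k => by rw [ha']; dsimp; split; exacts [ha k, Nat.zero_le N]
  have hb'N : ∀ k, b' k ≤ N := fun k => by rw [hb']; dsimp; split; exacts [hb k, Nat.zero_le N]
  have h2 : ∑ k ∈ Icc 1 n, (a' k : ℝ) * β ^ (-(k:ℤ))
      = ∑ k ∈ Icc 1 n, (b' k : ℝ) * β ^ (-(k:ℤ)) := by
    rw [← pad_sum n₁ n (le_max_left _ _) a, ← pad_sum n₂ n (le_max_right _ _) b]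
    exact h
  rw [icc_to_range hβ0, icc_to_range hβ0] at h2
  have h3 := mul_left_cancel₀ (zpow_ne_zero _ hβ0.ne') h2
  have h4 := unique_pos hβ0 hNβ n (fun j => a' (n - j)) (fun j => b' (n - j))
    (fun k => ha'N _) (fun k => hb'N _) h3
  intro k hk1
  rcases le_or_gt k n with hkn | hkn
  · have := h4 (n - k) (by omega)
    rwa [show n - (n - k) = k by omega] at this
  · rw [if_neg (by omega), if_neg (by omega)]

-- more aux

/-- Extension of a digit function by `q` leading zeros. -/
def extD (q : ℕ) {m : ℕ} (d : Fin (m + 1) → ℕ → ℕ) : Fin (m + 1) → ℕ → ℕ :=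
  fun j k => if k ≤ q then 0 else d j (k - q)

lemma ext_sum (hβ0 : 0 < β) (q τ' : ℕ) (c : ℕ → ℕ) :
    ∑ k ∈ Icc 1 τ', (c k : ℝ) * β ^ (-(k:ℤ))
      = β ^ q * ∑ k ∈ Icc 1 (τ' + q),
          ((if k ≤ q then 0 else c (k - q) : ℕ) : ℝ) * β ^ (-(k:ℤ)) := by
  rw [Finset.mul_sum]
  have hsub : Icc (q+1) (τ'+q) ⊆ Icc 1 (τ'+q) := by
    apply Finset.Icc_subset_Icc_left; omega
  rw [← Finset.sum_subset hsub (fun k hk hk' => ?_)]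
  · apply Finset.sum_nbij' (i := fun k => k + q) (j := fun k => k - q)
    · intro a ha; rw [Finset.mem_Icc] at ha ⊢; omega
    · intro a ha; rw [Finset.mem_Icc] at ha ⊢; omega
    · intro a ha; rw [Finset.mem_Icc] at ha; omega
    · intro a ha; rw [Finset.mem_Icc] at ha; omega
    · intro a ha
      rw [Finset.mem_Icc] at ha
      rw [if_neg (by omega), show a + q - q = a by omega]
      rw [mul_comm (β ^ q), mul_assoc]
      congr 1
      rw [← zpow_natCast β q, ← zpow_add₀ hβ0.ne']
      congr 1
      push_cast
      ring
  · rw [Finset.mem_Icc] at hk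
    rw [Finset.mem_Icc] at hk'
    rw [if_pos (by omega)]
    simp

lemma isDigitRep_of_shift {m : ℕ} {t : Fin (m+1) → ℝ} (hβ0 : 0 < β)
    {q τ' : ℕ} {d' : Fin (m+1) → ℕ → ℕ}
    (h : IsDigitRep N β (fun j => β ^ q * t j) τ' d') :
    IsDigitRep N β t (τ' + q) (extD q d') := by
  obtain ⟨hbd, hsum⟩ := h
  constructor
  · intro j k
    unfold extD
    split
    · exact Nat.zero_le N
    · exact hbd j _
  · intro j
    have h1 := hsum j
    dsimp only at h1
    rw [ext_sum hβ0 q τ' (d' j)] at h1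
    have h2 : β ^ q * t j = β ^ q * ((1 - β) / N *
        ∑ k ∈ Icc 1 (τ' + q), ((extD q d' j k : ℕ) : ℝ) * β ^ (-(k:ℤ))) := by
      rw [h1]; unfold extD; ring
    exact mul_left_cancel₀ (pow_ne_zero q hβ0.ne') h2

lemma shift_of_isDigitRep {m : ℕ} {t : Fin (m+1) → ℝ} (hβ0 : 0 < β)
    {q τ' : ℕ} {d : Fin (m+1) → ℕ → ℕ}
    (h : IsDigitRep N β t (τ' + q) d)
    (h0 : ∀ j k, 1 ≤ k → k ≤ q → d j k = 0) :
    IsDigitRep N β (fun j => β ^ q * t j) τ' (fun j k => d j (k + q)) := by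
  obtain ⟨hbd, hsum⟩ := h
  constructor
  · intro j k; exact hbd j _
  · intro j
    have hcg : ∑ k ∈ Icc 1 (τ' + q), ((d j k : ℕ) : ℝ) * β ^ (-(k:ℤ))
        = ∑ k ∈ Icc 1 (τ' + q),
            ((if k ≤ q then 0 else d j (k - q + q) : ℕ) : ℝ) * β ^ (-(k:ℤ)) := by
      apply Finset.sum_congr rfl
      intro k hk
      rw [Finset.mem_Icc] at hk
      congr 2
      split
      · exact h0 j k hk.1 (by omega)
      · rw [show k - q + q = k by omega]
    have := ext_sum hβ0 q τ' (fun k => d j (k + q))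
    rw [← hcg] at this
    show β ^ q * t j = _
    rw [hsum j, this]
    ring

lemma getD_le_s17 {w : List ℕ} (h : ∀ x ∈ w, x ≤ N) (i : ℕ) : w.getD i 0 ≤ N := by
  rcases lt_or_ge i w.length with h' | h'
  · rw [List.getD_eq_getElem _ _ h']
    exact h _ (List.getElem_mem h')
  · rw [List.getD_eq_default _ _ h']
    exact Nat.zero_le N

lemma words_append {u v : List ℕ} {a b : ℕ} (hu : u ∈ Words N a) (hv : v ∈ Words N b) :
    u ++ v ∈ Words N (a + b) := by
  obtain ⟨hul, hue⟩ := hu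
  obtain ⟨hvl, hve⟩ := hv
  refine ⟨by simp [hul, hvl], ?_⟩
  intro x hx
  rcases List.mem_append.1 hx with h | h
  exacts [hue x h, hve x h]

lemma digitSup_extD {m : ℕ} (q : ℕ) (d : Fin (m+1) → ℕ → ℕ) (k : ℕ) :
    digitSup (extD q d) k = if k ≤ q then 0 else digitSup d (k - q) := by
  unfold digitSup extD
  by_cases h : k ≤ q
  · rw [if_pos h, Finset.sup_congr rfl (fun j _ => if_pos h)]
    exact Finset.sup_const Finset.univ_nonempty 0
  · rw [if_neg h]
    exact Finset.sup_congr rfl (fun j _ => if_neg h)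

lemma omega_decomp {q τ' : ℕ} {s s' : ℕ → ℕ}
    (hs : ∀ k, 1 ≤ k → k ≤ τ' + q → s k = if k ≤ q then 0 else s' (k - q)) :
    Omega N (τ' + q) s (τ' + q)
      = { w | ∃ w' ∈ Omega N τ' s' τ', ∃ u ∈ Words N q, w = w' ++ u } := by
  ext w
  constructor
  · rintro ⟨⟨hlen, hmem⟩, hcond⟩
    refine ⟨w.take τ', ⟨⟨?_, ?_⟩, ?_⟩, w.drop τ', ⟨?_, ?_⟩, (List.take_append_drop τ' w).symm⟩
    · rw [List.length_take, hlen]; omega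
    · intro x hx; exact hmem x ((List.take_sublist τ' w).mem hx)
    · intro k hk1 hk2
      have h3 := hcond (k + q) (by omega) (by omega)
      rw [hs (k + q) (by omega) (by omega), if_neg (by omega),
        show k + q - q = k by omega] at h3
      have hgd : (w.take τ').getD (τ' - k) 0 = w.getD (τ' + q - (k + q)) 0 := by
        rw [show τ' + q - (k + q) = τ' - k by omega]
        conv_rhs => rw [← List.take_append_drop τ' w]
        rw [List.getD_append]
        rw [List.length_take, hlen]
        omega
      rw [hgd]
      exact h3
    · rw [List.length_drop, hlen]; omega
    · intro x hx; exact hmem x ((List.drop_sublist τ' w).mem hx)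
  · rintro ⟨w', ⟨⟨hl', hm'⟩, hc'⟩, u, ⟨hlu, hmu⟩, rfl⟩
    refine ⟨⟨by simp [hl', hlu], ?_⟩, ?_⟩
    · intro x hx
      rcases List.mem_append.1 hx with h | h
      exacts [hm' x h, hmu x h]
    · intro k hk1 hk2
      rw [hs k hk1 hk2]
      by_cases h : k ≤ q
      · rw [if_pos h]
        have : (w' ++ u).getD (τ' + q - k) 0 ≤ N := by
          apply getD_le_s17
          intro x hx
          rcases List.mem_append.1 hx with h | h
          exacts [hm' x h, hmu x h]
        omega
      · rw [if_neg h]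
        have hgd : (w' ++ u).getD (τ' + q - k) 0 = w'.getD (τ' - (k - q)) 0 := by
          rw [show τ' + q - k = τ' - (k - q) by omega]
          rw [List.getD_append]
          rw [hl']
          omega
        rw [hgd]
        exact hc' (k - q) (by omega) (by omega)

lemma omegaHat_decomp {q τ' : ℕ} {s s' : ℕ → ℕ}
    (hs : ∀ k, 1 ≤ k → k ≤ τ' + q → s k = if k ≤ q then 0 else s' (k - q)) :
    OmegaHat N (τ' + q) s (τ' + q)
      = { w | ∃ w' ∈ OmegaHat N τ' s' τ', ∃ u ∈ Words N q, w = w' ++ u } := by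
  ext w
  constructor
  · rintro ⟨⟨hlen, hmem⟩, hcond⟩
    refine ⟨w.take τ', ⟨⟨?_, ?_⟩, ?_⟩, w.drop τ', ⟨?_, ?_⟩, (List.take_append_drop τ' w).symm⟩
    · rw [List.length_take, hlen]; omega
    · intro x hx; exact hmem x ((List.take_sublist τ' w).mem hx)
    · intro k hk1 hk2
      have h3 := hcond (k + q) (by omega) (by omega)
      rw [hs (k + q) (by omega) (by omega), if_neg (by omega),
        show k + q - q = k by omega] at h3
      have hgd : (w.take τ').getD (τ' - k) 0 = w.getD (τ' + q - (k + q)) 0 := by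
        rw [show τ' + q - (k + q) = τ' - k by omega]
        conv_rhs => rw [← List.take_append_drop τ' w]
        rw [List.getD_append]
        rw [List.length_take, hlen]
        omega
      rw [hgd]
      exact h3
    · rw [List.length_drop, hlen]; omega
    · intro x hx; exact hmem x ((List.drop_sublist τ' w).mem hx)
  · rintro ⟨w', ⟨⟨hl', hm'⟩, hc'⟩, u, ⟨hlu, hmu⟩, rfl⟩
    refine ⟨⟨by simp [hl', hlu], ?_⟩, ?_⟩
    · intro x hx
      rcases List.mem_append.1 hx with h | h
      exacts [hm' x h, hmu x h]
    · intro k hk1 hk2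
      rw [hs k hk1 hk2]
      by_cases h : k ≤ q
      · rw [if_pos h]
        exact Nat.zero_le _
      · rw [if_neg h]
        have hgd : (w' ++ u).getD (τ' + q - k) 0 = w'.getD (τ' - (k - q)) 0 := by
          rw [show τ' + q - k = τ' - (k - q) by omega]
          rw [List.getD_append]
          rw [hl']
          omega
        rw [hgd]
        exact hc' (k - q) (by omega) (by omega)

lemma ofFn_split {q τ' : ℕ} (op : ℕ → ℕ → ℕ) (hop : ∀ x, op x 0 = x)
    (c : ℕ → ℕ) (hc0 : ∀ k, 1 ≤ k → k ≤ q → c k = 0)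
    (w' u : List ℕ) (hw' : w'.length = τ') (hu : u.length = q) :
    (List.ofFn fun idx : Fin (τ' + q) => op ((w' ++ u).getD (idx : ℕ) 0) (c (τ' + q - (idx : ℕ))))
      = (List.ofFn fun idx : Fin τ' => op (w'.getD (idx : ℕ) 0) (c (q + (τ' - (idx : ℕ))))) ++ u := by
  rw [List.ofFn_add]
  congr 1
  · apply List.ext_getElem (by simp)
    intro i h1 h2
    rw [List.getElem_ofFn, List.getElem_ofFn]
    simp only [Fin.coe_castAdd, Fin.val_castLE]
    have hi : i < τ' := by simpa using h2
    rw [List.getD_append _ _ _ _ (by omega), show τ' + q - i = q + (τ' - i) by omega]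
  · apply List.ext_getElem (by simp [hu])
    intro i h1 h2
    rw [List.getElem_ofFn]
    simp only [Fin.coe_natAdd]
    have hi : i < q := by simpa [hu] using h2
    rw [List.getD_append_right _ _ _ _ (by omega), hw',
      show τ' + i - τ' = i by omega,
      show τ' + q - (τ' + i) = q - i by omega,
      hc0 (q - i) (by omega) (by omega), hop,
      List.getD_eq_getElem _ _ (by omega)]

lemma wset_decomp {m : ℕ} (q τ' : ℕ) (d' : Fin (m+1) → ℕ → ℕ) :
    Wset N (τ' + q) (extD q d')
      = { z | ∃ v ∈ Wset N τ' d', ∃ u ∈ Words N q, z = v ++ u } := by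
  have hs : ∀ k, 1 ≤ k → k ≤ τ' + q →
      digitSup (extD q d') k = if k ≤ q then 0 else digitSup d' (k - q) :=
    fun k _ _ => digitSup_extD q d' k
  have hkey : ∀ (j : Fin (m+1)) (w' u : List ℕ), w'.length = τ' → u.length = q →
      ∀ (op : ℕ → ℕ → ℕ), (∀ x, op x 0 = x) →
      (List.ofFn fun idx : Fin (τ' + q) =>
          op ((w' ++ u).getD (idx : ℕ) 0) (extD q d' j (τ' + q - (idx : ℕ))))
        = (List.ofFn fun idx : Fin τ' =>
            op (w'.getD (idx : ℕ) 0) (d' j (τ' - (idx : ℕ)))) ++ u := by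
    intro j w' u hw' hu op hop
    rw [ofFn_split op hop (fun k => extD q d' j k)
      (fun k hk1 hk2 => by simp only [extD]; rw [if_pos hk2]) w' u hw' hu]
    congr 1
    apply List.ext_getElem (by simp)
    intro i h1 h2
    rw [List.getElem_ofFn, List.getElem_ofFn]
    have hi : i < τ' := by simpa using h1
    congr 1
    unfold extD
    rw [if_neg (by omega), show q + (τ' - i) - q = τ' - i by omega]
  ext z
  constructor
  · rintro (⟨w, hw, j, rfl⟩ | ⟨w, hw, j, rfl⟩)
    · rw [omega_decomp hs] at hw
      obtain ⟨w', hw', u, hu, rfl⟩ := hw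
      obtain ⟨hl', _⟩ := hw'.1
      refine ⟨_, Or.inl ⟨w', hw', j, rfl⟩, u, hu, ?_⟩
      exact hkey j w' u hl' hu.1 (· + ·) (fun x => Nat.add_zero x)
    · rw [omegaHat_decomp hs] at hw
      obtain ⟨w', hw', u, hu, rfl⟩ := hw
      obtain ⟨hl', _⟩ := hw'.1
      refine ⟨_, Or.inr ⟨w', hw', j, rfl⟩, u, hu, ?_⟩
      exact hkey j w' u hl' hu.1 (· - ·) (fun x => Nat.sub_zero x)
  · rintro ⟨v, (⟨w', hw', j, rfl⟩ | ⟨w', hw', j, rfl⟩), u, hu, rfl⟩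
    · obtain ⟨hl', _⟩ := hw'.1
      refine Or.inl ⟨w' ++ u, ?_, j, (hkey j w' u hl' hu.1 (· + ·) (fun x => Nat.add_zero x)).symm⟩
      rw [omega_decomp hs]
      exact ⟨w', hw', u, hu, rfl⟩
    · obtain ⟨hl', _⟩ := hw'.1
      refine Or.inr ⟨w' ++ u, ?_, j, (hkey j w' u hl' hu.1 (· - ·) (fun x => Nat.sub_zero x)).symm⟩
      rw [omegaHat_decomp hs]
      exact ⟨w', hw', u, hu, rfl⟩

lemma wset_subset_words {m : ℕ} (τ : ℕ) (d : Fin (m+1) → ℕ → ℕ) :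
    Wset N τ d ⊆ Words N τ := by
  rintro z (⟨w, hw, j, rfl⟩ | ⟨w, hw, j, rfl⟩)
  · obtain ⟨⟨hlen, hmem⟩, hcond⟩ := hw
    refine ⟨List.length_ofFn, ?_⟩
    intro x hx
    rw [List.mem_ofFn] at hx
    obtain ⟨idx, rfl⟩ := hx
    have hik : (idx : ℕ) < τ := idx.2
    have h1 := hcond (τ - idx) (by omega) (by omega)
    rw [show τ - (τ - (idx : ℕ)) = idx by omega] at h1
    have h2 : d j (τ - (idx : ℕ)) ≤ digitSup d (τ - (idx : ℕ)) :=
      Finset.le_sup (f := fun j => d j (τ - (idx : ℕ))) (Finset.mem_univ j)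
    show w.getD (idx : ℕ) 0 + d j (τ - (idx : ℕ)) ≤ N
    omega
  · obtain ⟨⟨hlen, hmem⟩, hcond⟩ := hw
    refine ⟨List.length_ofFn, ?_⟩
    intro x hx
    rw [List.mem_ofFn] at hx
    obtain ⟨idx, rfl⟩ := hx
    have : w.getD (idx : ℕ) 0 ≤ N := getD_le_s17 hmem _
    exact le_trans (Nat.sub_le _ _) this

lemma adm_union_sub {m : ℕ} (τ : ℕ) (d : Fin (m+1) → ℕ → ℕ) (ℓ : ℕ) :
    (⋃ n ∈ Finset.Icc τ ℓ,
      { z : List ℕ | ∃ u ∈ Words N (n - τ), ∃ w ∈ Wset N τ d, ∃ v ∈ Words N (ℓ - n),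
          z = u ++ w ++ v }) ⊆ Words N ℓ := by
  intro z hz
  simp only [Set.mem_iUnion] at hz
  obtain ⟨n, hn, u, hu, w, hw, v, hv, rfl⟩ := hz
  rw [Finset.mem_Icc] at hn
  have hw' := wset_subset_words τ d hw
  have := words_append hu (words_append hw' hv)
  rwa [show n - τ + (τ + (ℓ - n)) = ℓ by omega, ← List.append_assoc] at this

lemma wset_congr {m : ℕ} (τ : ℕ) (d e : Fin (m+1) → ℕ → ℕ)
    (h : ∀ j k, 1 ≤ k → k ≤ τ → d j k = e j k) :
    Wset N τ d = Wset N τ e := by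
  have hsup : ∀ k, 1 ≤ k → k ≤ τ → digitSup d k = digitSup e k := by
    intro k h1 h2
    exact Finset.sup_congr rfl (fun j _ => h j k h1 h2)
  have hom : Omega N τ (digitSup d) τ = Omega N τ (digitSup e) τ := by
    ext w
    constructor <;> rintro ⟨hw, hc⟩ <;> refine ⟨hw, fun k h1 h2 => ?_⟩
    · rw [← hsup k h1 h2]; exact hc k h1 h2
    · rw [hsup k h1 h2]; exact hc k h1 h2
  have homh : OmegaHat N τ (digitSup d) τ = OmegaHat N τ (digitSup e) τ := by
    ext w
    constructor <;> rintro ⟨hw, hc⟩ <;> refine ⟨hw, fun k h1 h2 => ?_⟩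
    · rw [← hsup k h1 h2]; exact hc k h1 h2
    · rw [hsup k h1 h2]; exact hc k h1 h2
  have hfn : ∀ (w : List ℕ) (j : Fin (m+1)) (op : ℕ → ℕ → ℕ),
      (List.ofFn fun idx : Fin τ => op (w.getD (idx : ℕ) 0) (d j (τ - (idx : ℕ))))
        = List.ofFn fun idx : Fin τ => op (w.getD (idx : ℕ) 0) (e j (τ - (idx : ℕ))) := by
    intro w j op
    congr 1
    funext idx
    rw [h j (τ - idx) (by omega) (by omega)]
  unfold Wset
  rw [hom, homh]
  congr 1
  · ext z
    constructor <;> rintro ⟨w, hw, j, rfl⟩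
    · exact ⟨w, hw, j, hfn w j (· + ·)⟩
    · exact ⟨w, hw, j, (hfn w j (· + ·)).symm⟩
  · ext z
    constructor <;> rintro ⟨w, hw, j, rfl⟩
    · exact ⟨w, hw, j, hfn w j (· - ·)⟩
    · exact ⟨w, hw, j, (hfn w j (· - ·)).symm⟩

lemma admissibleWith_congr {m : ℕ} (τ : ℕ) (d e : Fin (m+1) → ℕ → ℕ)
    (h : ∀ j k, 1 ≤ k → k ≤ τ → d j k = e j k) :
    AdmissibleWith N τ d ↔ AdmissibleWith N τ e := by
  unfold AdmissibleWith
  rw [wset_congr τ d e h]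

lemma adm_iff {m : ℕ} (q τ' : ℕ) (d' : Fin (m+1) → ℕ → ℕ) :
    AdmissibleWith N (τ' + q) (extD q d') ↔ AdmissibleWith N τ' d' := by
  constructor
  · rintro ⟨ℓ, hℓ, heq⟩
    refine ⟨ℓ, by omega, ?_⟩
    apply Set.Subset.antisymm (adm_union_sub τ' d' ℓ)
    intro z hz
    rw [← heq] at hz
    simp only [Set.mem_iUnion] at hz ⊢
    obtain ⟨n, hn, u, hu, w, hw, v, hv, rfl⟩ := hz
    rw [Finset.mem_Icc] at hn
    rw [wset_decomp q τ' d'] at hw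
    obtain ⟨w₁, hw₁, x, hx, rfl⟩ := hw
    refine ⟨n - q, by rw [Finset.mem_Icc]; omega, u, ?_, w₁, hw₁, x ++ v, ?_, ?_⟩
    · rwa [show n - q - τ' = n - (τ' + q) by omega]
    · have := words_append hx hv
      rwa [show q + (ℓ - n) = ℓ - (n - q) by omega] at this
    · simp [List.append_assoc]
  · rintro ⟨ℓ', hℓ', heq⟩
    refine ⟨ℓ' + q, by omega, ?_⟩
    apply Set.Subset.antisymm (adm_union_sub (τ' + q) (extD q d') (ℓ' + q))
    intro z hz
    obtain ⟨hzl, hze⟩ := hz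
    have hz₁ : z.take ℓ' ∈ Words N ℓ' := by
      refine ⟨by rw [List.length_take, hzl]; omega, ?_⟩
      intro x hx
      exact hze x ((List.take_sublist _ _).mem hx)
    have hz₂ : z.drop ℓ' ∈ Words N q := by
      refine ⟨by rw [List.length_drop, hzl]; omega, ?_⟩
      intro x hx
      exact hze x ((List.drop_sublist _ _).mem hx)
    rw [← heq] at hz₁
    simp only [Set.mem_iUnion] at hz₁ ⊢
    obtain ⟨n', hn', u, hu, w₁, hw₁, v, hv, hzeq⟩ := hz₁
    rw [Finset.mem_Icc] at hn'
    set z₂ := z.drop ℓ' with hz2def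
    set x := (v ++ z₂).take q with hxdef
    set v₂ := (v ++ z₂).drop q with hv2def
    have hvz : v ++ z₂ ∈ Words N (ℓ' - n' + q) := words_append hv hz₂
    have hx : x ∈ Words N q := by
      refine ⟨by rw [hxdef, List.length_take, hvz.1]; omega, ?_⟩
      intro y hy
      exact hvz.2 y ((List.take_sublist _ _).mem hy)
    have hv₂ : v₂ ∈ Words N (ℓ' - n') := by
      refine ⟨by rw [hv2def, List.length_drop, hvz.1]; omega, ?_⟩
      intro y hy
      exact hvz.2 y ((List.drop_sublist _ _).mem hy)
    refine ⟨n' + q, by rw [Finset.mem_Icc]; omega, u, ?_, w₁ ++ x, ?_, v₂, ?_, ?_⟩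
    · rwa [show n' + q - (τ' + q) = n' - τ' by omega]
    · rw [wset_decomp q τ' d']
      exact ⟨w₁, hw₁, x, hx, rfl⟩
    · rwa [show ℓ' + q - (n' + q) = ℓ' - n' by omega]
    · calc z = z.take ℓ' ++ z₂ := (List.take_append_drop ℓ' z).symm
        _ = (u ++ w₁ ++ v) ++ z₂ := by rw [hzeq]
        _ = (u ++ w₁) ++ (v ++ z₂) := by rw [List.append_assoc]
        _ = (u ++ w₁) ++ (x ++ v₂) := by rw [hxdef, hv2def, List.take_append_drop]
        _ = u ++ (w₁ ++ x) ++ v₂ := by simp [List.append_assoc]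

lemma digits_zero (hβ0 : 0 < β) (hNβ : (N : ℝ) * β < 1 - β)
    (hfac : (1 - β) / (N : ℝ) ≠ 0) {m : ℕ} {t : Fin (m+1) → ℝ} {τ : ℕ}
    {d : Fin (m+1) → ℕ → ℕ} (hrep : IsDigitRep N β t τ d) (q : ℕ)
    (hT' : ∀ j, β ^ q * t j ∈ Tset N β) :
    ∀ j k, 1 ≤ k → k ≤ q → k ≤ τ → d j k = 0 := by
  intro j k hk1 hkq hkτ
  obtain ⟨n, hn1, c, hc, hx⟩ := hT' j
  have h1 : (1 - β) / N * ∑ k ∈ Icc 1 n, (c k : ℝ) * β ^ (-(k:ℤ))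
      = (1 - β) / N * (β ^ q * ∑ k ∈ Icc 1 (n + q),
          ((if k ≤ q then 0 else c (k - q) : ℕ) : ℝ) * β ^ (-(k:ℤ))) := by
    rw [← ext_sum hβ0]
  have h2 : β ^ q * t j = β ^ q * ((1 - β) / N * ∑ k ∈ Icc 1 (n + q),
      ((if k ≤ q then 0 else c (k - q) : ℕ) : ℝ) * β ^ (-(k:ℤ))) := by
    rw [hx, h1]; ring
  have h3 := mul_left_cancel₀ (pow_ne_zero q hβ0.ne') h2
  have h4 : ∑ k ∈ Icc 1 τ, (d j k : ℝ) * β ^ (-(k:ℤ))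
      = ∑ k ∈ Icc 1 (n + q), ((if k ≤ q then 0 else c (k - q) : ℕ) : ℝ) * β ^ (-(k:ℤ)) :=
    mul_left_cancel₀ hfac (by rw [← hrep.2 j, ← h3])
  have h5 := rep_unique hβ0 hNβ τ (n + q) (d j)
    (fun k => if k ≤ q then 0 else c (k - q)) (hrep.1 j)
    (fun k => by split; exacts [Nat.zero_le N, hc _]) h4 k hk1
  rw [if_pos hkτ, if_pos (by omega : k ≤ n + q)] at h5
  rw [h5]
  rw [if_pos hkq]

end Aux

/-- Suppose `0 < β < 1/(N+1)` and `t = (t_0,…,t_m) ∈ T^{m+1}` with `0 = t_0 < ⋯ < t_m`.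
If `β^q · t ∈ T^{m+1}` for some `q ∈ ℤ_+`, then `t` is an admissible translation vector
iff `β^q · t` is an admissible translation vector. -/
theorem stmt17 (N : ℕ) (hN : 0 < N) (β : ℝ) (hβ0 : 0 < β) (hβ1 : β < 1 / (N + 1))
    (m : ℕ) (t : Fin (m + 1) → ℝ) (ht0 : t 0 = 0) (hmono : StrictMono t)
    (hT : ∀ j, t j ∈ Tset N β) (q : ℕ) (hq : 1 ≤ q)
    (hT' : ∀ j, β ^ q * t j ∈ Tset N β) :
    IsAdmissible N β t ↔ IsAdmissible N β (fun j => β ^ q * t j) := by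
  by_cases hm : m = 0
  · subst hm
    have hfun : (fun j : Fin 1 => β ^ q * t j) = t := by
      funext j
      rw [Fin.eq_zero j, ht0, mul_zero]
    rw [hfun]
  · -- basic facts
    have hN1 : (1:ℝ) ≤ N := by exact_mod_cast hN
    have hNpos : (0:ℝ) < N + 1 := by linarith
    rw [lt_div_iff₀ hNpos] at hβ1
    have hNβ : (N : ℝ) * β < 1 - β := by nlinarith
    have h1β : (0:ℝ) < 1 - β := by nlinarith
    have hfac : (1 - β) / (N : ℝ) ≠ 0 := by positivity
    set j1 : Fin (m + 1) := ⟨1, by omega⟩ with hj1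
    have htpos : 0 < t j1 := by
      have h01 : (0 : Fin (m + 1)) < j1 := by
        rw [Fin.lt_def, hj1]
        simp
      have := hmono h01
      rwa [ht0] at this
    constructor
    · rintro ⟨_, τ, d, ⟨hrep, hmin⟩, hadm⟩
      have h0 : ∀ j k, 1 ≤ k → k ≤ q → k ≤ τ → d j k = 0 :=
        digits_zero hβ0 hNβ hfac hrep q hT'
      have hqτ : q < τ := by
        by_contra hcon
        push_neg at hcon
        have hz : t j1 = 0 := by
          rw [hrep.2 j1]
          have hzero : ∑ k ∈ Finset.Icc 1 τ, (d j1 k : ℝ) * β ^ (-(k:ℤ)) = 0 := by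
            apply Finset.sum_eq_zero
            intro k hk
            rw [Finset.mem_Icc] at hk
            rw [h0 j1 k hk.1 (le_trans hk.2 hcon) hk.2]
            simp
          rw [hzero, mul_zero]
        exact absurd hz (ne_of_gt htpos)
      set τ' := τ - q with hτ'
      have hττ : τ' + q = τ := by omega
      set d' : Fin (m+1) → ℕ → ℕ := fun j k => d j (k + q) with hd'
      have hrepτ : IsDigitRep N β t (τ' + q) d := by rwa [hττ]
      have hrep' : IsDigitRep N β (fun j => β ^ q * t j) τ' d' :=
        shift_of_isDigitRep hβ0 hrepτ (fun j k hk1 hk2 => h0 j k hk1 hk2 (by omega))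
      refine ⟨hT', τ', d', ⟨hrep', ?_⟩, ?_⟩
      · intro σ hσ e he
        exact hmin (σ + q) (by omega) _ (isDigitRep_of_shift hβ0 he)
      · have hcong : ∀ j k, 1 ≤ k → k ≤ τ → d j k = extD q d' j k := by
          intro j k hk1 hk2
          unfold extD
          by_cases hkq : k ≤ q
          · rw [if_pos hkq]
            exact h0 j k hk1 hkq hk2
          · rw [if_neg hkq, hd']
            dsimp only
            congr 1
            omega
        have hA := (admissibleWith_congr τ d (extD q d') hcong).mp hadm
        rw [← hττ] at hA
        exact (adm_iff q τ' d').mp hA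
    · rintro ⟨_, τ', d'', ⟨hrep', hmin'⟩, hadm'⟩
      have hD : IsDigitRep N β t (τ' + q) (extD q d'') := isDigitRep_of_shift hβ0 hrep'
      refine ⟨hT, τ' + q, extD q d'', ⟨hD, ?_⟩, (adm_iff q τ' d'').mpr hadm'⟩
      intro σ hσ e he
      have hcmp : ∀ j k, 1 ≤ k →
          (if k ≤ σ then e j k else 0) = (if k ≤ τ' + q then extD q d'' j k else 0) :=
        fun j => rep_unique hβ0 hNβ σ (τ' + q) (e j) (extD q d'' j) (he.1 j) (hD.1 j)
          (mul_left_cancel₀ hfac (by rw [← he.2 j, ← hD.2 j]))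
      have he0 : ∀ j k, 1 ≤ k → k ≤ q → k ≤ σ → e j k = 0 := by
        intro j k hk1 hkq hkσ
        have := hcmp j k hk1
        rw [if_pos hkσ, if_pos (by omega : k ≤ τ' + q)] at this
        rw [this]
        unfold extD
        rw [if_pos hkq]
      by_cases hσq : σ ≤ q
      · have hz : t j1 = 0 := by
          rw [he.2 j1]
          have hzero : ∑ k ∈ Finset.Icc 1 σ, (e j1 k : ℝ) * β ^ (-(k:ℤ)) = 0 := by
            apply Finset.sum_eq_zero
            intro k hk
            rw [Finset.mem_Icc] at hk
            rw [he0 j1 k hk.1 (by omega) hk.2]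
            simp
          rw [hzero, mul_zero]
        exact absurd hz (ne_of_gt htpos)
      · push_neg at hσq
        have heq : IsDigitRep N β t (σ - q + q) e := by
          rw [show σ - q + q = σ by omega]
          exact he
        have hsh := shift_of_isDigitRep hβ0 heq (fun j k hk1 hk2 => he0 j k hk1 hk2 (by omega))
        exact hmin' (σ - q) (by omega) _ hsh


end HSCantor
end
end
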